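/- arXiv:2305.07058 — 3 statements merged into one kernel-verified Lean document; each statement's English description precedes it below -/
import Mathlib

section
/- Simon's absorption lemma: Let β ≥ 0 and C₀ > 0. Let ℬ be the class of open balls contained in the unit ball B₁ ⊂ ℝⁿ, and let σ : ℬ → [0, ∞) be subadditive in the sense that σ(B) ≤ Σ_{j=1}^N σ(Bʲ) whenever B ⊂ ∪_{j=1}^N Bʲ with Bʲ ∈ ℬ. Then there exists δ > 0 depending only on n and β such that: if ρ^β σ(B_{ρ/2}(y)) ≤ δ ρ^β σ(B_ρ(y)) + C₀ holds whenever B_ρ(y) ⊂ B₁, then σ(B_{1/2}) ≤ C C₀ for a constant C depending only on n and β. -/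
open Metric Set

private lemma net_lemma (n : ℕ) : ∃ (M : ℕ) (w : Fin M → EuclideanSpace ℝ (Fin n)),
    (∀ j, ‖w j‖ ≤ 1/2) ∧
    closedBall (0 : EuclideanSpace ℝ (Fin n)) (1/2) ⊆ ⋃ j, ball (w j) (1/8) := by
  set K : Set (EuclideanSpace ℝ (Fin n)) := closedBall 0 (1/2) with hK
  obtain ⟨t, ht⟩ := (isCompact_closedBall (0 : EuclideanSpace ℝ (Fin n)) (1/2)).elim_finite_subcover
    (fun z : K => ball (z : EuclideanSpace ℝ (Fin n)) (1/8)) (fun _ => isOpen_ball)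
    (fun x hx => Set.mem_iUnion.2 ⟨⟨x, hx⟩, mem_ball_self (by norm_num)⟩)
  refine ⟨t.card, fun k => ((t.equivFin.symm k : K) : EuclideanSpace ℝ (Fin n)),
    fun k => ?_, fun x hx => ?_⟩
  · have h := ((t.equivFin.symm k : K)).2
    simpa [hK, mem_closedBall, dist_zero_right] using h
  · obtain ⟨i, hi, hxi⟩ := Set.mem_iUnion₂.1 (ht hx)
    exact Set.mem_iUnion.2 ⟨t.equivFin ⟨i, hi⟩, by simpa using hxi⟩

/-- Simon's absorption lemma: there exist `δ > 0` and `C > 0`, depending only on `n` and `β`,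
such that any nonnegative, finitely subadditive set function `σ` on the open balls contained
in the unit ball of `ℝⁿ` satisfying the absorption hypothesis with constant `C₀` obeys
`σ(B_{1/2}) ≤ C C₀`. -/
theorem stmt7 (n : ℕ) (β : ℝ) (hβ : 0 ≤ β) :
    ∃ δ : ℝ, 0 < δ ∧ ∃ C : ℝ, 0 < C ∧
      ∀ C₀ : ℝ, 0 < C₀ →
      ∀ σ : Set (EuclideanSpace ℝ (Fin n)) → ℝ,
        (∀ s, 0 ≤ σ s) →
        (∀ (N : ℕ) (c : Fin N → EuclideanSpace ℝ (Fin n)) (r : Fin N → ℝ)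
            (y : EuclideanSpace ℝ (Fin n)) (ρ : ℝ),
          (∀ j, ball (c j) (r j) ⊆ ball 0 1) → ball y ρ ⊆ ball 0 1 →
          ball y ρ ⊆ ⋃ j, ball (c j) (r j) →
          σ (ball y ρ) ≤ ∑ j, σ (ball (c j) (r j))) →
        (∀ (y : EuclideanSpace ℝ (Fin n)) (ρ : ℝ), 0 < ρ → ball y ρ ⊆ ball 0 1 →
          ρ ^ β * σ (ball y (ρ / 2)) ≤ δ * (ρ ^ β * σ (ball y ρ)) + C₀) →
        σ (ball 0 (1 / 2)) ≤ C * C₀ := by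
  obtain ⟨M, w, hw, hwcov⟩ := net_lemma n
  have h2β : (0:ℝ) < (2:ℝ) ^ β := Real.rpow_pos_of_pos (by norm_num) β
  have h4β : (0:ℝ) < (4:ℝ) ^ β := Real.rpow_pos_of_pos (by norm_num) β
  have hM1 : (0:ℝ) < (M:ℝ) + 1 := by positivity
  refine ⟨(2 * ((M:ℝ) + 1) * (2:ℝ) ^ β)⁻¹, by positivity,
    2 * ((M:ℝ) + 1) * (4:ℝ) ^ β, by positivity, ?_⟩
  intro C₀ hC₀ σ hσ0 hsub habs
  set δv : ℝ := (2 * ((M:ℝ) + 1) * (2:ℝ) ^ β)⁻¹ with hδv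
  have hδv0 : 0 < δv := by positivity
  -- monotonicity under the unit ball
  have hmono : ∀ (y : EuclideanSpace ℝ (Fin n)) (r : ℝ), ball y r ⊆ ball 0 1 →
      σ (ball y r) ≤ σ (ball 0 1) := by
    intro y r h
    have := hsub 1 (fun _ => 0) (fun _ => 1) y r (fun _ => subset_rfl) h
      (fun x hx => Set.mem_iUnion.2 ⟨0, h hx⟩)
    simpa using this
  set S : Set ℝ := {x | ∃ (y : EuclideanSpace ℝ (Fin n)) (ρ : ℝ), 0 < ρ ∧ ρ ≤ 1 ∧
      ball y ρ ⊆ ball 0 1 ∧ x = ρ ^ β * σ (ball y (ρ/2))} with hS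
  have hne : ((1:ℝ) ^ β * σ (ball (0:EuclideanSpace ℝ (Fin n)) (1/2))) ∈ S :=
    ⟨0, 1, one_pos, le_refl 1, subset_rfl, by norm_num⟩
  have hbdd : BddAbove S := by
    refine ⟨σ (ball 0 1), fun x hx => ?_⟩
    obtain ⟨y, ρ, hρ, hρ1, hB, rfl⟩ := hx
    have h1 : ρ ^ β ≤ 1 := Real.rpow_le_one hρ.le hρ1 hβ
    have h2 : σ (ball y (ρ/2)) ≤ σ (ball 0 1) :=
      hmono _ _ ((ball_subset_ball (by linarith)).trans hB)
    calc ρ ^ β * σ (ball y (ρ/2)) ≤ 1 * σ (ball 0 1) :=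
          mul_le_mul h1 h2 (hσ0 _) one_pos.le
      _ = σ (ball 0 1) := one_mul _
  set Q : ℝ := sSup S with hQdef
  have hQ0 : 0 ≤ Q := by
    have h := le_csSup hbdd hne
    have : (0:ℝ) ≤ (1:ℝ) ^ β * σ (ball (0:EuclideanSpace ℝ (Fin n)) (1/2)) := by
      have := hσ0 (ball (0:EuclideanSpace ℝ (Fin n)) (1/2)); positivity
    linarith
  -- key absorption estimate
  have key : ∀ x ∈ S, x ≤ Q/2 + ((M:ℝ)+1) * (4:ℝ)^β * C₀ := by
    rintro x ⟨y, ρ, hρ, hρ1, hB, rfl⟩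
    have hρβ : (0:ℝ) < ρ ^ β := Real.rpow_pos_of_pos hρ β
    set z : Fin M → EuclideanSpace ℝ (Fin n) := fun j => y + ρ • w j with hz
    have hdist : ∀ j, dist (z j) y ≤ ρ/2 := by
      intro j
      have h1 : dist (z j) y = ρ * ‖w j‖ := by
        rw [hz]; simp [dist_eq_norm, norm_smul, abs_of_pos hρ]
      rw [h1]
      calc ρ * ‖w j‖ ≤ ρ * (1/2) := mul_le_mul_of_nonneg_left (hw j) hρ.le
        _ = ρ/2 := by ring
    have hzB : ∀ j, ball (z j) (ρ/2) ⊆ ball y ρ := by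
      intro j x hx
      have h1 := dist_triangle x (z j) y
      have h2 := mem_ball.1 hx
      have h3 := hdist j
      exact mem_ball.2 (by linarith)
    have hcov : ball y (ρ/2) ⊆ ⋃ j, ball (z j) (ρ/8) := by
      intro x hx
      have hx' : ρ⁻¹ • (x - y) ∈ closedBall (0:EuclideanSpace ℝ (Fin n)) (1/2) := by
        rw [mem_closedBall, dist_zero_right, norm_smul, norm_inv, Real.norm_eq_abs,
          abs_of_pos hρ, ← dist_eq_norm]
        have h1 := mem_ball.1 hx
        have h2 : ρ⁻¹ * ρ = 1 := inv_mul_cancel₀ hρ.ne'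
        have h3 : 0 < ρ⁻¹ := inv_pos.2 hρ
        nlinarith [dist_nonneg (x := x) (y := y)]
      obtain ⟨j, hj⟩ := Set.mem_iUnion.1 (hwcov hx')
      refine Set.mem_iUnion.2 ⟨j, ?_⟩
      have he : x - z j = ρ • (ρ⁻¹ • (x - y) - w j) := by
        rw [smul_sub, smul_inv_smul₀ hρ.ne', hz]; exact sub_add_eq_sub_sub x y (ρ • w j)
      have hd : dist x (z j) = ρ * dist (ρ⁻¹ • (x - y)) (w j) := by
        rw [dist_eq_norm, he, norm_smul, Real.norm_eq_abs, abs_of_pos hρ, dist_eq_norm]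
      rw [mem_ball, hd]
      have hj' := mem_ball.1 hj
      nlinarith
    have hsubadd := hsub M z (fun _ => ρ/8) y (ρ/2)
      (fun j => ((ball_subset_ball (by linarith)).trans (hzB j)).trans hB)
      ((ball_subset_ball (by linarith)).trans hB) hcov
    have hterm : ∀ j, ρ ^ β * σ (ball (z j) (ρ/8)) ≤ Q / (2*((M:ℝ)+1)) + (4:ℝ)^β * C₀ := by
      intro j
      have hb4 : ball (z j) (ρ/4) ⊆ ball 0 1 :=
        ((ball_subset_ball (by linarith)).trans (hzB j)).trans hB
      have h1 := habs (z j) (ρ/4) (by linarith) hb4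
      have e8 : ρ/4/2 = ρ/8 := by ring
      rw [e8] at h1
      have h2 : (ρ/2) ^ β * σ (ball (z j) (ρ/2/2)) ≤ Q :=
        le_csSup hbdd ⟨z j, ρ/2, by linarith, by linarith, (hzB j).trans hB, rfl⟩
      have e4 : ρ/2/2 = ρ/4 := by ring
      rw [e4] at h2
      have eA : (ρ/4 : ℝ) ^ β = ρ ^ β / (4:ℝ)^β := Real.div_rpow hρ.le (by norm_num : (0:ℝ) ≤ 4) β
      have eB : (ρ/2 : ℝ) ^ β = ρ ^ β / (2:ℝ)^β := Real.div_rpow hρ.le (by norm_num : (0:ℝ) ≤ 2) β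
      rw [eA] at h1
      rw [eB] at h2
      set a := σ (ball (z j) (ρ/8)) with ha
      set b := σ (ball (z j) (ρ/4)) with hb
      have ha0 : 0 ≤ a := hσ0 _
      have hb0 : 0 ≤ b := hσ0 _
      have h1' : ρ ^ β * a ≤ δv * (ρ ^ β * b) + (4:ℝ)^β * C₀ := by
        have hmul := mul_le_mul_of_nonneg_left h1 h4β.le
        calc ρ ^ β * a = (4:ℝ)^β * (ρ ^ β / (4:ℝ)^β * a) := by
              field_simp
          _ ≤ (4:ℝ)^β * (δv * (ρ ^ β / (4:ℝ)^β * b) + C₀) := hmul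
          _ = δv * (ρ ^ β * b) + (4:ℝ)^β * C₀ := by
              field_simp
      have h2' : ρ ^ β * b ≤ (2:ℝ)^β * Q := by
        calc ρ ^ β * b = (2:ℝ)^β * (ρ ^ β / (2:ℝ)^β * b) := by field_simp
          _ ≤ (2:ℝ)^β * Q := mul_le_mul_of_nonneg_left h2 h2β.le
      have h3 : δv * ((2:ℝ)^β * Q) = Q / (2*((M:ℝ)+1)) := by
        rw [hδv]; field_simp
      calc ρ ^ β * a ≤ δv * (ρ ^ β * b) + (4:ℝ)^β * C₀ := h1'
        _ ≤ δv * ((2:ℝ)^β * Q) + (4:ℝ)^β * C₀ := by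
            have := mul_le_mul_of_nonneg_left h2' hδv0.le
            linarith
        _ = Q / (2*((M:ℝ)+1)) + (4:ℝ)^β * C₀ := by rw [h3]
    have hsum : ρ ^ β * σ (ball y (ρ/2)) ≤ (M:ℝ) * (Q/(2*((M:ℝ)+1)) + (4:ℝ)^β * C₀) := by
      calc ρ ^ β * σ (ball y (ρ/2)) ≤ ρ ^ β * ∑ j, σ (ball (z j) (ρ/8)) :=
            mul_le_mul_of_nonneg_left hsubadd hρβ.le
        _ = ∑ j : Fin M, ρ ^ β * σ (ball (z j) (ρ/8)) := Finset.mul_sum _ _ _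
        _ ≤ ∑ _j : Fin M, (Q/(2*((M:ℝ)+1)) + (4:ℝ)^β * C₀) :=
            Finset.sum_le_sum (fun j _ => hterm j)
        _ = (M:ℝ) * (Q/(2*((M:ℝ)+1)) + (4:ℝ)^β * C₀) := by
            rw [Finset.sum_const, Finset.card_univ, Fintype.card_fin, nsmul_eq_mul]
    have hA : (M:ℝ) * (Q/(2*((M:ℝ)+1))) ≤ Q/2 := by
      rw [← mul_div_assoc, div_le_div_iff₀ (by positivity) (by norm_num : (0:ℝ) < 2)]
      nlinarith [hQ0, hM1]
    have hBb : (M:ℝ) * ((4:ℝ)^β * C₀) ≤ ((M:ℝ)+1) * ((4:ℝ)^β * C₀) :=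
      mul_le_mul_of_nonneg_right (by linarith) (by positivity)
    calc ρ ^ β * σ (ball y (ρ/2)) ≤ (M:ℝ) * (Q/(2*((M:ℝ)+1)) + (4:ℝ)^β * C₀) := hsum
      _ = (M:ℝ) * (Q/(2*((M:ℝ)+1))) + (M:ℝ) * ((4:ℝ)^β * C₀) := by ring
      _ ≤ Q/2 + ((M:ℝ)+1) * (4:ℝ)^β * C₀ := by linarith
  have hQle : Q ≤ Q/2 + ((M:ℝ)+1) * (4:ℝ)^β * C₀ := csSup_le ⟨_, hne⟩ key
  have hfin : σ (ball (0:EuclideanSpace ℝ (Fin n)) (1/2)) ≤ Q := by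
    have h := le_csSup hbdd hne
    rwa [Real.one_rpow, one_mul] at h
  linarith
end

section
/- Convexity lower bound for the regularized norm: Let A(x) and A₀ = A(0) be symmetric positive definite n×n matrices, φ_δ the regularized A₀-norm, H a symmetric n×n matrix (the Hessian of u), and z ∈ ℝⁿ with |z|_{A₀} > δ. Then φ_δ(z) · ( Σ_{i,j,k,l} A(x)_{ij} ∂²_{z_k z_l}φ_δ(z) H_{jk} H_{il} ) ≥ tr(A(x) H A₀ H) − |z|_{A₀}^{-2} |H A₀ z|²_{A(x)}, where |v|²_{A(x)} = vᵀA(x)v. -/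
open Matrix


/-- The norm induced by a matrix `A`: `|z|_A = (zᵀ A z)^{1/2}`. -/
noncomputable def normA {n : ℕ} (A : Matrix (Fin n) (Fin n) ℝ) (z : Fin n → ℝ) : ℝ :=
  Real.sqrt (z ⬝ᵥ A.mulVec z)

/-- The regularized `A`-norm `φ_δ`. -/
noncomputable def phiDelta {n : ℕ} (A : Matrix (Fin n) (Fin n) ℝ) (δ : ℝ) (z : Fin n → ℝ) : ℝ :=
  if δ < normA A z then normA A z else δ / 2 + (normA A z) ^ 2 / (2 * δ)

section Aux
variable {n : ℕ}


variable {n : ℕ}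

noncomputable def pr (n : ℕ) (i : Fin n) : (Fin n → ℝ) →L[ℝ] ℝ := ContinuousLinearMap.proj i

noncomputable def Dq (A₀ : Matrix (Fin n) (Fin n) ℝ) (w : Fin n → ℝ) : (Fin n → ℝ) →L[ℝ] ℝ :=
  ∑ i, ∑ j, A₀ i j • ((w i) • pr n j + (w j) • pr n i)

lemma Dq_apply (A₀ : Matrix (Fin n) (Fin n) ℝ) (w v : Fin n → ℝ) :
    Dq A₀ w v = ∑ i, ∑ j, A₀ i j * (w i * v j + w j * v i) := by
  simp [Dq, pr, ContinuousLinearMap.sum_apply, mul_comm, mul_add]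

lemma hq (A₀ : Matrix (Fin n) (Fin n) ℝ) (w : Fin n → ℝ) :
    HasFDerivAt (fun w => w ⬝ᵥ A₀.mulVec w) (Dq A₀ w) w := by
  have : (fun w : Fin n → ℝ => w ⬝ᵥ A₀.mulVec w) =
      fun w => ∑ i, ∑ j, A₀ i j * (w i * w j) := by
    funext w
    simp [dotProduct, Matrix.mulVec, Finset.mul_sum]
    congr 1; funext i; congr 1; funext j; ring
  rw [this]
  have : HasFDerivAt (fun w : Fin n → ℝ => ∑ i, ∑ j, A₀ i j * (w i * w j))
      (∑ i, ∑ j, A₀ i j • ((w i) • pr n j + (w j) • pr n i)) w := by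
    apply HasFDerivAt.fun_sum; intro i _
    apply HasFDerivAt.fun_sum; intro j _
    exact ((hasFDerivAt_apply i w).mul (hasFDerivAt_apply j w)).const_mul _
  exact this

lemma Dq_apply_symm (A₀ : Matrix (Fin n) (Fin n) ℝ) (hA₀s : A₀.IsSymm) (w v : Fin n → ℝ) :
    Dq A₀ w v = 2 * ((A₀.mulVec w) ⬝ᵥ v) := by
  rw [Dq_apply]
  simp only [dotProduct, Matrix.mulVec, Finset.mul_sum, Finset.sum_mul, mul_add,
    Finset.sum_add_distrib, two_mul]
  congr 1
  · rw [Finset.sum_comm]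
    refine Finset.sum_congr rfl fun j _ => Finset.sum_congr rfl fun i _ => ?_
    rw [← hA₀s.apply i j]; ring
  · refine Finset.sum_congr rfl fun i _ => Finset.sum_congr rfl fun j _ => ?_
    ring

lemma continuous_q (A₀ : Matrix (Fin n) (Fin n) ℝ) :
    Continuous (fun w : Fin n → ℝ => w ⬝ᵥ A₀.mulVec w) := by
  simp only [dotProduct, Matrix.mulVec]
  fun_prop

lemma continuous_normA (A₀ : Matrix (Fin n) (Fin n) ℝ) : Continuous (normA A₀) :=
  Real.continuous_sqrt.comp (continuous_q A₀)

lemma hnorm (A₀ : Matrix (Fin n) (Fin n) ℝ) (w : Fin n → ℝ)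
    (hw : w ⬝ᵥ A₀.mulVec w ≠ 0) :
    HasFDerivAt (normA A₀) ((1 / (2 * normA A₀ w)) • Dq A₀ w) w := by
  have := (Real.hasDerivAt_sqrt hw).comp_hasFDerivAt w (hq A₀ w)
  have e : normA A₀ = (fun x => √x) ∘ fun w => w ⬝ᵥ A₀ *ᵥ w := rfl
  rw [e]
  simpa [normA] using this

-- the open set
lemma eventually_eq_phi (A₀ : Matrix (Fin n) (Fin n) ℝ) (δ : ℝ) (w : Fin n → ℝ)
    (hw : δ < normA A₀ w) : phiDelta A₀ δ =ᶠ[nhds w] normA A₀ := by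
  have hU : IsOpen {v : Fin n → ℝ | δ < normA A₀ v} :=
    isOpen_lt continuous_const (continuous_normA A₀)
  filter_upwards [hU.mem_nhds hw] with v hv
  simp [phiDelta, hv]

lemma fderiv_phi (A₀ : Matrix (Fin n) (Fin n) ℝ) (hA₀s : A₀.IsSymm) (δ : ℝ) (hδ : 0 < δ)
    (w : Fin n → ℝ) (hw : δ < normA A₀ w) (l : Fin n) :
    fderiv ℝ (phiDelta A₀ δ) w (Pi.single l 1) =
      (A₀.mulVec w) l * (normA A₀ w)⁻¹ := by
  have hnw : 0 < normA A₀ w := lt_trans hδ hw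
  have hq0 : w ⬝ᵥ A₀.mulVec w ≠ 0 := by
    intro h
    rw [normA, h, Real.sqrt_zero] at hnw
    exact lt_irrefl 0 hnw
  have h1 : fderiv ℝ (phiDelta A₀ δ) w = ((1 / (2 * normA A₀ w)) • Dq A₀ w) := by
    rw [(eventually_eq_phi A₀ δ w hw).fderiv_eq, (hnorm A₀ w hq0).fderiv]
  rw [h1]
  simp only [ContinuousLinearMap.coe_smul', Pi.smul_apply, smul_eq_mul]
  rw [Dq_apply_symm A₀ hA₀s]
  have : (A₀.mulVec w) ⬝ᵥ Pi.single l 1 = (A₀.mulVec w) l := by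
    simp [dotProduct, Pi.single_apply, mul_ite]
  rw [this]
  field_simp

noncomputable def Ml (A₀ : Matrix (Fin n) (Fin n) ℝ) (l : Fin n) : (Fin n → ℝ) →L[ℝ] ℝ :=
  ∑ j, A₀ l j • pr n j

lemma Ml_apply (A₀ : Matrix (Fin n) (Fin n) ℝ) (l : Fin n) (v : Fin n → ℝ) :
    Ml A₀ l v = (A₀.mulVec v) l := by
  simp [Ml, pr, Matrix.mulVec, dotProduct, ContinuousLinearMap.sum_apply]

lemma hMl (A₀ : Matrix (Fin n) (Fin n) ℝ) (l : Fin n) (z : Fin n → ℝ) :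
    HasFDerivAt (fun w => (A₀.mulVec w) l) (Ml A₀ l) z := by
  have : (fun w : Fin n → ℝ => (A₀.mulVec w) l) = ⇑(Ml A₀ l) := by
    funext w; rw [Ml_apply]
  rw [this]
  exact (Ml A₀ l).hasFDerivAt

lemma D2_eq (A₀ : Matrix (Fin n) (Fin n) ℝ) (hA₀s : A₀.IsSymm) (δ : ℝ) (hδ : 0 < δ)
    (z : Fin n → ℝ) (hz : δ < normA A₀ z) (k l : Fin n) :
    fderiv ℝ (fun w => fderiv ℝ (phiDelta A₀ δ) w (Pi.single l 1)) z (Pi.single k 1) =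
      A₀ l k * (normA A₀ z)⁻¹ -
        (A₀.mulVec z) l * (A₀.mulVec z) k * ((normA A₀ z) ^ 2)⁻¹ * (normA A₀ z)⁻¹ := by
  set s := normA A₀ z with hs
  have hnz : 0 < s := lt_trans hδ hz
  have hq0 : z ⬝ᵥ A₀.mulVec z ≠ 0 := by
    intro h
    rw [hs, normA, h, Real.sqrt_zero] at hnz
    exact lt_irrefl 0 hnz
  -- eventual equality of first derivatives
  have hU : IsOpen {v : Fin n → ℝ | δ < normA A₀ v} :=
    isOpen_lt continuous_const (continuous_normA A₀)
  have hev : (fun w => fderiv ℝ (phiDelta A₀ δ) w (Pi.single l 1)) =ᶠ[nhds z]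
      (fun w => (A₀.mulVec w) l * (normA A₀ w)⁻¹) := by
    filter_upwards [hU.mem_nhds hz] with v hv
    exact fderiv_phi A₀ hA₀s δ hδ v hv l
  rw [hev.fderiv_eq]
  -- derivative of the product
  have hinv : HasFDerivAt (fun w => (normA A₀ w)⁻¹)
      ((-((s : ℝ) ^ 2)⁻¹) • ((1 / (2 * s)) • Dq A₀ z)) z :=
    (hasDerivAt_inv (ne_of_gt hnz)).comp_hasFDerivAt z (hnorm A₀ z hq0)
  have hprod := (hMl A₀ l z).fun_mul hinv
  rw [hprod.fderiv]
  simp only [ContinuousLinearMap.add_apply, ContinuousLinearMap.coe_smul', Pi.smul_apply,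
    smul_eq_mul]
  rw [Ml_apply, Dq_apply_symm A₀ hA₀s]
  have hd : (A₀.mulVec z) ⬝ᵥ Pi.single k 1 = (A₀.mulVec z) k := by
    simp [dotProduct, Pi.single_apply, mul_ite]
  rw [hd]
  have hk : (A₀.mulVec (Pi.single k 1)) l = A₀ l k := by
    simp [Matrix.mulVec, dotProduct, Pi.single_apply, mul_ite]
  rw [hk]
  rw [← hs]
  field_simp
  ring

lemma sum_rotate {α β γ : Type*} [Fintype α] [Fintype β] [Fintype γ]
    (f : α → β → γ → ℝ) :
    ∑ a, ∑ b, ∑ c, f a b c = ∑ c, ∑ b, ∑ a, f a b c := by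
  calc ∑ a, ∑ b, ∑ c, f a b c = ∑ b, ∑ a, ∑ c, f a b c := Finset.sum_comm
    _ = ∑ b, ∑ c, ∑ a, f a b c := Finset.sum_congr rfl fun b _ => Finset.sum_comm
    _ = ∑ c, ∑ b, ∑ a, f a b c := Finset.sum_comm

end Aux

/-- Convexity lower bound for the regularized norm: if `|z|_{A₀} > δ` then
`φ_δ(z) Σ_{ijkl} A(x)_{ij} ∂²_{z_k z_l} φ_δ(z) H_{jk} H_{il}
  ≥ tr(A(x) H A₀ H) − |z|_{A₀}^{-2} |H A₀ z|²_{A(x)}`. -/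
theorem stmt14 {n : ℕ} (A A₀ : Matrix (Fin n) (Fin n) ℝ)
    (hA : A.PosDef) (hA₀ : A₀.PosDef) (hAs : A.IsSymm) (hA₀s : A₀.IsSymm)
    (H : Matrix (Fin n) (Fin n) ℝ) (hHs : H.IsSymm)
    (δ : ℝ) (hδ : 0 < δ) (z : Fin n → ℝ) (hz : δ < normA A₀ z) :
    let D2 : Matrix (Fin n) (Fin n) ℝ := fun k l =>
      fderiv ℝ (fun w => fderiv ℝ (phiDelta A₀ δ) w (Pi.single l 1)) z (Pi.single k 1)
    phiDelta A₀ δ z * (∑ i, ∑ j, ∑ k, ∑ l, A i j * D2 k l * H j k * H i l) ≥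
      (A * H * A₀ * H).trace -
        ((normA A₀ z) ^ 2)⁻¹ *
          ((H.mulVec (A₀.mulVec z)) ⬝ᵥ A.mulVec (H.mulVec (A₀.mulVec z))) := by

  intro D2
  set s := normA A₀ z with hsdef
  have hs0 : 0 < s := lt_trans hδ hz
  have hφ : phiDelta A₀ δ z = s := if_pos hz
  set c := A₀.mulVec z with hcdef
  have key : ∀ k l, D2 k l = A₀ l k * s⁻¹ - c l * c k * (s ^ 2)⁻¹ * s⁻¹ :=
    fun k l => D2_eq A₀ hA₀s δ hδ z hz k l
  apply ge_of_eq
  rw [hφ]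
  have main : s * (∑ i, ∑ j, ∑ k, ∑ l, A i j * D2 k l * H j k * H i l) =
      (∑ i, ∑ j, ∑ k, ∑ l, A i j * A₀ l k * H j k * H i l) -
      (s ^ 2)⁻¹ * (∑ i, ∑ j, ∑ k, ∑ l, A i j * (c l * c k) * H j k * H i l) := by
    simp only [Finset.mul_sum, ← Finset.sum_sub_distrib]
    refine Finset.sum_congr rfl fun i _ => Finset.sum_congr rfl fun j _ =>
      Finset.sum_congr rfl fun k _ => Finset.sum_congr rfl fun l _ => ?_
    rw [key k l]
    field_simp
  rw [main]
  congr 1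
  · -- trace identity
    simp only [Matrix.trace, Matrix.diag, Matrix.mul_apply, Finset.sum_mul, Finset.mul_sum]
    refine Finset.sum_congr rfl fun i _ => ?_
    rw [sum_rotate]
    refine Finset.sum_congr rfl fun l _ => Finset.sum_congr rfl fun k _ =>
      Finset.sum_congr rfl fun j _ => ?_
    rw [← hA₀s.apply k l, ← hHs.apply i l]
    ring
  · -- quadratic form identity
    congr 1
    simp only [dotProduct, Matrix.mulVec, Finset.sum_mul, Finset.mul_sum]
    refine Finset.sum_congr rfl fun i _ => Finset.sum_congr rfl fun l _ =>
      Finset.sum_congr rfl fun j _ => Finset.sum_congr rfl fun k _ => ?_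
    ring
end

section
/- Covering of a half-ball intersection: For every ball B_ρ(y) ⊂ B₁ ⊂ ℝⁿ, the set ℝⁿ₊ ∩ B_{ρ/2}(y) (where ℝⁿ₊ = {x_n > 0}) can be covered by at most N(n) balls of two types: balls B_{ρ/16}(y_i) with B_{ρ/8}(y_i) ⊂ ℝⁿ₊ ∩ B_ρ(y), and balls B_{3ρ/16}(z_j) with z_j ∈ {x_n = 0} and ℝⁿ₊ ∩ B_{3ρ/8}(z_j) ⊂ ℝⁿ₊ ∩ B_ρ(y); here N(n) depends only on the dimension n. -/
/-!
A fixed finite `1/32`-net of the ball of radius `1/2`, rescaled to `y + ρ • p`, covers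
`B_{ρ/2}(y)` by a dimension-dependent number of balls of radius `ρ/32`. Such a ball meeting
`ℝⁿ₊ ∩ B_{ρ/2}(y)` at a point `x` lies in the interior ball `B_{ρ/16}(x)` when `x_n ≥ ρ/8`,
and otherwise in the boundary ball `B_{3ρ/16}(x')`, where `x'` is the projection of `x` onto
`{x_n = 0}`; the triangle inequality does the rest.
-/

open Metric

/-- The open upper half-space `{x_n > 0}` in Euclidean `ℝ^{n+1}`. -/
def upperHalf (n : ℕ) : Set (EuclideanSpace ℝ (Fin (n + 1))) :=
  {x | 0 < x (Fin.last n)}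

theorem exists_fin_subcover_of_two_kinds {ι α β X : Type*} (t : Finset ι) {T : Set X}
    {S : ι → Set X} (hT : T ⊆ ⋃ p ∈ t, S p) {P : α → Prop} {Q : β → Prop}
    {U : α → Set X} {V : β → Set X}
    (h : ∀ p, ∀ x ∈ T, x ∈ S p →
      (∃ a, P a ∧ S p ⊆ U a) ∨ ∃ b, Q b ∧ S p ⊆ V b) :
    ∃ k m : ℕ, k + m ≤ t.card ∧ ∃ (f : Fin k → α) (g : Fin m → β),
      (∀ i, P (f i)) ∧ (∀ j, Q (g j)) ∧ T ⊆ (⋃ i, U (f i)) ∪ ⋃ j, V (g j) := by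
  classical
  induction t using Finset.induction_on generalizing T with
  | empty => exact ⟨0, 0, le_rfl, Fin.elim0, Fin.elim0, nofun, nofun, by simpa using hT⟩
  | insert p t hp ih =>
    have hT' : T \ S p ⊆ ⋃ q ∈ t, S q := fun x ⟨hxT, hxp⟩ => by
      simpa [hxp] using hT hxT
    obtain ⟨k, m, hkm, f, g, hf, hg, hcov⟩ :=
      ih hT' fun q x hx => h q x hx.1
    have hcov' : T ⊆ S p ∪ ((⋃ i, U (f i)) ∪ ⋃ j, V (g j)) := fun x hx =>
      (em (x ∈ S p)).imp id fun hxp => hcov ⟨hx, hxp⟩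
    rw [Finset.card_insert_of_notMem hp]
    by_cases hne : ∃ x ∈ T, x ∈ S p
    · obtain ⟨x, hxT, hxp⟩ := hne
      rcases h p x hxT hxp with ⟨a, ha, hpa⟩ | ⟨b, hb, hpb⟩
      · refine ⟨k + 1, m, by omega, Fin.cons a f, g, Fin.forall_fin_succ.2 ⟨ha, hf⟩, hg,
          ?_⟩
        refine hcov'.trans fun x hx => ?_
        simp only [Set.mem_union, Set.mem_iUnion, Fin.exists_fin_succ, Fin.cons_zero,
          Fin.cons_succ] at hx ⊢
        have := @hpa x
        tauto
      · refine ⟨k, m + 1, by omega, f, Fin.cons b g, hf, Fin.forall_fin_succ.2 ⟨hb, hg⟩,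
          ?_⟩
        refine hcov'.trans fun x hx => ?_
        simp only [Set.mem_union, Set.mem_iUnion, Fin.exists_fin_succ, Fin.cons_zero,
          Fin.cons_succ] at hx ⊢
        have := @hpb x
        tauto
    · exact ⟨k, m, by omega, f, g, hf, hg,
        fun x hx => hcov ⟨hx, fun hxp => hne ⟨x, hx, hxp⟩⟩⟩

theorem exists_finset_forall_closedBall_subset_biUnion_ball {E : Type*}
    [NormedAddCommGroup E] [NormedSpace ℝ E] [ProperSpace E] (r : ℝ) {ε : ℝ} (hε : 0 < ε) :
    ∃ t : Finset E, ∀ (y : E) {ρ : ℝ}, 0 < ρ →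
      closedBall y (ρ * r) ⊆ ⋃ p ∈ t, ball (y + ρ • p) (ρ * ε) := by
  obtain ⟨t, ht⟩ := (isCompact_closedBall (0 : E) r).elim_finite_subcover (fun p => ball p ε)
    (fun _ => isOpen_ball) fun x _ => Set.mem_iUnion.2 ⟨x, mem_ball_self hε⟩
  refine ⟨t, fun y ρ hρ w hw => ?_⟩
  have hdist : ∀ p : E, dist w (y + ρ • p) = ρ * dist (ρ⁻¹ • (w - y)) p := by
    intro p
    have h : w - (y + ρ • p) = ρ • (ρ⁻¹ • (w - y) - p) := by
      rw [smul_sub, smul_inv_smul₀ hρ.ne', sub_sub]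
    rw [dist_eq_norm, dist_eq_norm, h, norm_smul, Real.norm_of_nonneg hρ.le]
  have hw' : ρ⁻¹ • (w - y) ∈ closedBall (0 : E) r := by
    rw [mem_closedBall, dist_zero_right, norm_smul, norm_inv, Real.norm_of_nonneg hρ.le,
      ← dist_eq_norm, inv_mul_le_iff₀ hρ]
    exact hw
  obtain ⟨p, hp, hwp⟩ := Set.mem_iUnion₂.1 (ht hw')
  refine Set.mem_iUnion₂.2 ⟨p, hp, ?_⟩
  rw [mem_ball, hdist]
  exact mul_lt_mul_of_pos_left hwp hρ

section UpperHalf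

variable {n : ℕ}

local notation "E" => EuclideanSpace ℝ (Fin (n + 1))

noncomputable def toBoundary (x : E) : E :=
  x - EuclideanSpace.single (Fin.last n) (x (Fin.last n))

@[simp]
theorem toBoundary_last (x : E) : toBoundary x (Fin.last n) = 0 := by
  simp [toBoundary]

theorem dist_toBoundary (x : E) : dist x (toBoundary x) = |x (Fin.last n)| := by
  simp [toBoundary, PiLp.norm_single]

theorem ball_subset_upperHalf {x : E} {r : ℝ} (hr : r ≤ x (Fin.last n)) :
    ball x r ⊆ upperHalf n := fun w hw => by
  have h := (PiLp.dist_apply_le w x (Fin.last n)).trans_lt hw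
  rw [Real.dist_eq, abs_lt] at h
  exact (by linarith : 0 < w (Fin.last n))

theorem exists_interior_or_boundary_ball {y x c : E} {ρ : ℝ}
    (hx : x ∈ upperHalf n ∩ ball y (ρ / 2)) (hc : x ∈ ball c (ρ / 32)) :
    (∃ a, ball a (ρ / 8) ⊆ upperHalf n ∩ ball y ρ ∧ ball c (ρ / 32) ⊆ ball a (ρ / 16)) ∨
      ∃ z, (z (Fin.last n) = 0 ∧
        upperHalf n ∩ ball z (3 * ρ / 8) ⊆ upperHalf n ∩ ball y ρ) ∧
        ball c (ρ / 32) ⊆ ball z (3 * ρ / 16) := by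
  obtain ⟨hxH, hxy⟩ := hx
  rw [mem_ball, dist_comm] at hc
  rw [mem_ball] at hxy
  have hρ : 0 < ρ := by linarith [dist_nonneg (x := c) (y := x)]
  rcases le_or_gt (ρ / 8) (x (Fin.last n)) with hhigh | hlow
  · refine Or.inl ⟨x, Set.subset_inter (ball_subset_upperHalf hhigh) (ball_subset_ball' ?_),
      ball_subset_ball' ?_⟩ <;> linarith
  · have hxz : dist x (toBoundary x) < ρ / 8 := by
      rwa [dist_toBoundary, abs_of_pos hxH]
    refine Or.inr ⟨toBoundary x, ⟨toBoundary_last x,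
      Set.inter_subset_inter_right _ (ball_subset_ball' ?_)⟩, ball_subset_ball' ?_⟩
    · linarith [dist_triangle (toBoundary x) x y, dist_comm x (toBoundary x)]
    · linarith [dist_triangle c x (toBoundary x)]

end UpperHalf

/-- Covering of a half-ball intersection: for every ball `B_ρ(y) ⊆ B₁`, the set
`ℝⁿ₊ ∩ B_{ρ/2}(y)` is covered by at most `N(n)` balls `B_{ρ/16}(yᵢ)` with
`B_{ρ/8}(yᵢ) ⊆ ℝⁿ₊ ∩ B_ρ(y)` and balls `B_{3ρ/16}(zⱼ)` centered on `{x_n = 0}` with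
`ℝⁿ₊ ∩ B_{3ρ/8}(zⱼ) ⊆ ℝⁿ₊ ∩ B_ρ(y)`. -/
theorem stmt17 (n : ℕ) :
    ∃ N : ℕ, ∀ (y : EuclideanSpace ℝ (Fin (n + 1))) (ρ : ℝ), 0 < ρ →
      ball y ρ ⊆ ball 0 1 →
      ∃ (k m : ℕ), k + m ≤ N ∧
        ∃ (yc : Fin k → EuclideanSpace ℝ (Fin (n + 1)))
          (zc : Fin m → EuclideanSpace ℝ (Fin (n + 1))),
          (∀ i, ball (yc i) (ρ / 8) ⊆ upperHalf n ∩ ball y ρ) ∧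
          (∀ j, zc j (Fin.last n) = 0 ∧
            upperHalf n ∩ ball (zc j) (3 * ρ / 8) ⊆ upperHalf n ∩ ball y ρ) ∧
          upperHalf n ∩ ball y (ρ / 2) ⊆
            (⋃ i, ball (yc i) (ρ / 16)) ∪ ⋃ j, ball (zc j) (3 * ρ / 16) := by
  obtain ⟨t, ht⟩ := exists_finset_forall_closedBall_subset_biUnion_ball
    (E := EuclideanSpace ℝ (Fin (n + 1))) (1 / 2) (ε := 1 / 32) (by norm_num)
  simp only [mul_one_div] at ht
  refine ⟨t.card, fun y ρ hρ _ => ?_⟩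
  exact exists_fin_subcover_of_two_kinds t (S := fun p => ball (y + ρ • p) (ρ / 32))
    (fun x hx => ht y hρ (ball_subset_closedBall hx.2)) fun _ _ hx hxp =>
      exists_interior_or_boundary_ball hx hxp
end
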